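/- Let a, b ∈ ℝ^8, d ∈ ℝ^4 with d ≥ 0 componentwise, and f ∈ ℝ. Suppose the inequality a·c + b·ℓ + d·z ≤ f holds for every point (c,ℓ,z) ∈ Em(Q^FLP, D^8, C^8). Define the affine map 𝒜^GB(w) := (1 − w_1 − w_2, w_1 − w_2, w_1 + w_2 − 1, −w_1 + w_2), identified with (z^y_{i,j}, z^x_{i,j}, z^y_{j,i}, z^x_{j,i}). Then the inequality a·c + b·ℓ + d·𝒜^GB(w) ≤ f holds for every point (c,ℓ,w) ∈ Em(Q^FLP, D^4, GB^4). -/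
import Mathlib


/-!  Direction index: `0 = x`, `1 = y`.  Box index: `0 = i`, `1 = j`. -/

/-- Pairwise layout data, indexed by direction `s : Fin 2` and box `k : Fin 2`. -/
abbrev Vec2 := Fin 2 → Fin 2 → ℝ

/-- Box `p` precedes box `q` in direction `s`. -/
def pre (c l : Vec2) (s p q : Fin 2) : Prop :=
  c s p + l s p / 2 ≤ c s q - l s q / 2

/-- Box `p` does not precede box `q` in direction `s`. -/
def npre (c l : Vec2) (s p q : Fin 2) : Prop :=
  c s q - l s q / 2 ≤ c s p + l s p / 2

/-- Stay-on-the-floor constraints. -/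
def sitb (L : Fin 2 → ℝ) (c l : Vec2) : Prop :=
  ∀ s k, l s k / 2 ≤ c s k ∧ c s k ≤ L s - l s k / 2

/-- The four-branch non-overlap disjunction `D⁴`. -/
def D4 (c l : Vec2) : Prop :=
  pre c l 1 0 1 ∨ pre c l 0 0 1 ∨ pre c l 1 1 0 ∨ pre c l 0 1 0

/-- The eight branches of the refined disjunction `D⁸`. -/
def br (c l : Vec2) : Fin 8 → Prop :=
  ![pre c l 1 0 1 ∧ npre c l 0 0 1 ∧ npre c l 0 1 0,
    pre c l 1 0 1 ∧ pre c l 0 0 1,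
    pre c l 0 0 1 ∧ npre c l 1 0 1 ∧ npre c l 1 1 0,
    pre c l 0 0 1 ∧ pre c l 1 1 0,
    pre c l 1 1 0 ∧ npre c l 0 0 1 ∧ npre c l 0 1 0,
    pre c l 0 1 0 ∧ pre c l 1 1 0,
    pre c l 0 1 0 ∧ npre c l 1 0 1 ∧ npre c l 1 1 0,
    pre c l 0 1 0 ∧ pre c l 1 0 1]

/-- The refined disjunction `D⁸`. -/
def D8 (c l : Vec2) : Prop := ∃ k, br c l k

/-- The 0/1 code whose only `1` is in coordinate `(s, p)`; coordinate `(s, p)` stands for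
the variable attached to "box `p` precedes the other box in direction `s`". -/
def uCode (s p : Fin 2) : Vec2 := fun s' p' => if s' = s ∧ p' = p then 1 else 0

/-- The codes of the encoding `C⁸` for the eight branches of `D⁸`. -/
def c8code : Fin 8 → Vec2 :=
  ![uCode 1 0, uCode 1 0 + uCode 0 0, uCode 0 0, uCode 0 0 + uCode 1 1,
    uCode 1 1, uCode 1 1 + uCode 0 1, uCode 0 1, uCode 0 1 + uCode 1 0]

/-- `Q^lb`: stay-on-the-floor plus lower bounds on widths. -/
def Qlb (L : Fin 2 → ℝ) (lb : Fin 2 → Fin 2 → ℝ) (c l : Vec2) : Prop :=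
  sitb L c l ∧ ∀ s k, lb s k ≤ l s k

/-- `Q^ub`: stay-on-the-floor plus lower and upper bounds on widths. -/
def Qub (L : Fin 2 → ℝ) (lb ub : Fin 2 → Fin 2 → ℝ) (c l : Vec2) : Prop :=
  sitb L c l ∧ ∀ s k, lb s k ≤ l s k ∧ l s k ≤ ub s k

/-- `Q^FLP`: stay-on-the-floor, width bounds, and area constraints. -/
def QFLP (L : Fin 2 → ℝ) (lb ub : Fin 2 → Fin 2 → ℝ) (A : Fin 2 → ℝ) (c l : Vec2) : Prop :=
  Qub L lb ub c l ∧ ∀ k, A k ≤ l 0 k * l 1 k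

/-- Embedding of `Q` with disjunction `D⁴` and the unary encoding `U⁴`. -/
def EmU4 (Q : Vec2 → Vec2 → Prop) (c l u : Vec2) : Prop :=
  ∃ s p : Fin 2, Q c l ∧ pre c l s p (1 - p) ∧ u = uCode s p

/-- Embedding of `Q` with disjunction `D⁸` and encoding `C⁸`. -/
def EmC8 (Q : Vec2 → Vec2 → Prop) (c l z : Vec2) : Prop :=
  ∃ k : Fin 8, Q c l ∧ br c l k ∧ z = c8code k

/-- Embedding of `Q` with disjunction `D⁴` and the Gray encoding `GB⁴`. -/
def EmGB4 (Q : Vec2 → Vec2 → Prop) (c l : Vec2) (w : Fin 2 → ℝ) : Prop :=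
  (Q c l ∧ pre c l 1 0 1 ∧ w = ![0, 0]) ∨
  (Q c l ∧ pre c l 0 0 1 ∧ w = ![1, 0]) ∨
  (Q c l ∧ pre c l 1 1 0 ∧ w = ![1, 1]) ∨
  (Q c l ∧ pre c l 0 1 0 ∧ w = ![0, 1])

/-- Dot product of two coefficient vectors indexed by `(s, k)`. -/
def dotp (a x : Vec2) : ℝ := ∑ s, ∑ k, a s k * x s k

/-- The unary formulation (with binary `u`). -/
def Uform (L : Fin 2 → ℝ) (lb : Fin 2 → Fin 2 → ℝ) (c l u : Vec2) : Prop :=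
  (∀ s p, u s p = 0 ∨ u s p = 1) ∧
  (∀ s p, l s p / 2 + lb s (1 - p) * u s (1 - p) ≤ c s p ∧
      c s p ≤ L s - l s p / 2 - lb s (1 - p) * u s p) ∧
  (∀ s p, c s p + l s p / 2 ≤ c s (1 - p) - l s (1 - p) / 2 + L s * (1 - u s p)) ∧
  (∀ s p, lb s p ≤ l s p) ∧
  u 0 0 + u 0 1 + u 1 0 + u 1 1 = 1

/-- The refined unary formulation (with binary `z`). -/
def RUform (L : Fin 2 → ℝ) (lb : Fin 2 → Fin 2 → ℝ) (c l z : Vec2) : Prop :=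
  (∀ s p, z s p = 0 ∨ z s p = 1) ∧
  (∀ s p, l s p / 2 + lb s (1 - p) * z s (1 - p) ≤ c s p ∧
      c s p ≤ L s - l s p / 2 - lb s (1 - p) * z s p) ∧
  (∀ s p, c s p + l s p / 2 ≤ c s (1 - p) - l s (1 - p) / 2 + L s * (1 - z s p)) ∧
  (∀ s p, lb s p ≤ l s p) ∧
  (∀ s p, c s (1 - p) - l s (1 - p) / 2 + (lb s 0 + lb s 1) * (z s 0 + z s 1) ≤
      c s p + l s p / 2 + L s * z s p) ∧
  1 ≤ z 0 0 + z 0 1 + z 1 0 + z 1 1 ∧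
  (∀ s, z s 0 + z s 1 ≤ 1)

/-- `Q^obj`: `Q^lb` augmented with the objective-linearization variables `dv`. -/
def Qobj (L : Fin 2 → ℝ) (lb : Fin 2 → Fin 2 → ℝ) (c l : Vec2) (dv : Fin 2 → ℝ) : Prop :=
  Qlb L lb c l ∧ ∀ s, c s 0 - c s 1 ≤ dv s ∧ c s 1 - c s 0 ≤ dv s

/-- Embedding of `Q^obj` with disjunction `D⁸` and encoding `C⁸`. -/
def EmC8obj (L : Fin 2 → ℝ) (lb : Fin 2 → Fin 2 → ℝ) (c l : Vec2) (dv : Fin 2 → ℝ)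
    (z : Vec2) : Prop :=
  ∃ k : Fin 8, Qobj L lb c l dv ∧ br c l k ∧ z = c8code k

/-- The affine map `𝒜^GB` translating Gray codes to `C⁸`-style codes. -/
def AGB (w : Fin 2 → ℝ) : Vec2 :=
  fun s p =>
    if s = 1 then (if p = 0 then 1 - w 0 - w 1 else w 0 + w 1 - 1)
    else (if p = 0 then w 0 - w 1 else -w 0 + w 1)

lemma dotp_mono (d x y : Vec2) (hd : ∀ s p, 0 ≤ d s p) (h : ∀ s p, x s p ≤ y s p) :
    dotp d x ≤ dotp d y := by
  unfold dotp
  refine Finset.sum_le_sum fun s _ => Finset.sum_le_sum fun p _ => ?_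
  exact mul_le_mul_of_nonneg_left (h s p) (hd s p)

lemma c8e0 : c8code 0 = uCode 1 0 := rfl
lemma c8e1 : c8code 1 = uCode 1 0 + uCode 0 0 := rfl
lemma c8e2 : c8code 2 = uCode 0 0 := rfl
lemma c8e3 : c8code 3 = uCode 0 0 + uCode 1 1 := rfl
lemma c8e4 : c8code 4 = uCode 1 1 := rfl
lemma c8e5 : c8code 5 = uCode 1 1 + uCode 0 1 := rfl
lemma c8e6 : c8code 6 = uCode 0 1 := rfl
lemma c8e7 : c8code 7 = uCode 0 1 + uCode 1 0 := rfl

lemma npre_of_not_pre {c l : Vec2} {s p q : Fin 2} (h : ¬ pre c l s p q) :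
    npre c l s p q := le_of_not_ge h

/-- A valid inequality `a·c + b·ℓ + d·z ≤ f` (with `d ≥ 0`) for
`Em(Q^FLP, D⁸, C⁸)` translates, via the affine map `𝒜^GB`, to a valid inequality for
`Em(Q^FLP, D⁴, GB⁴)`. -/
theorem valid_inequality_C8_to_GB4 (L : Fin 2 → ℝ) (lb ub : Fin 2 → Fin 2 → ℝ)
    (A : Fin 2 → ℝ) (hL : ∀ s, 0 < L s) (hlb : ∀ s k, 0 < lb s k)
    (hub : ∀ s k, lb s k ≤ ub s k) (hA : ∀ k, 0 < A k)
    (a b d : Vec2) (f : ℝ) (hd : ∀ s p, 0 ≤ d s p)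
    (hvalid : ∀ c l z : Vec2, EmC8 (QFLP L lb ub A) c l z →
      dotp a c + dotp b l + dotp d z ≤ f) :
    ∀ (c l : Vec2) (w : Fin 2 → ℝ), EmGB4 (QFLP L lb ub A) c l w →
      dotp a c + dotp b l + dotp d (AGB w) ≤ f := by
  intro c l w hmem
  have key : ∀ k : Fin 8, QFLP L lb ub A c l → br c l k →
      (∀ s p, AGB w s p ≤ c8code k s p) →
      dotp a c + dotp b l + dotp d (AGB w) ≤ f := by
    intro k hQ hbr hle
    have h1 : dotp d (AGB w) ≤ dotp d (c8code k) := dotp_mono d _ _ hd hle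
    have h2 := hvalid c l (c8code k) ⟨k, hQ, hbr, rfl⟩
    linarith
  rcases hmem with ⟨hQ, hp, hw⟩ | ⟨hQ, hp, hw⟩ | ⟨hQ, hp, hw⟩ | ⟨hQ, hp, hw⟩
  · by_cases h1 : pre c l 0 0 1
    · refine key 1 hQ (by simp [br]; exact ⟨hp, h1⟩) ?_
      intro s p; fin_cases s <;> fin_cases p <;>
        simp [AGB, c8e0, c8e1, c8e2, c8e3, c8e4, c8e5, c8e6, c8e7, uCode, hw, Pi.add_apply] <;> norm_num
    · by_cases h2 : pre c l 0 1 0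
      · refine key 7 hQ (by simp [br]; exact ⟨h2, hp⟩) ?_
        intro s p; fin_cases s <;> fin_cases p <;>
          simp [AGB, c8e0, c8e1, c8e2, c8e3, c8e4, c8e5, c8e6, c8e7, uCode, hw, Pi.add_apply] <;> norm_num
      · refine key 0 hQ
          (by simp [br]; exact ⟨hp, npre_of_not_pre h1, npre_of_not_pre h2⟩) ?_
        intro s p; fin_cases s <;> fin_cases p <;>
          simp [AGB, c8e0, c8e1, c8e2, c8e3, c8e4, c8e5, c8e6, c8e7, uCode, hw, Pi.add_apply] <;> norm_num
  · by_cases h1 : pre c l 1 0 1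
    · refine key 1 hQ (by simp [br]; exact ⟨h1, hp⟩) ?_
      intro s p; fin_cases s <;> fin_cases p <;>
        simp [AGB, c8e0, c8e1, c8e2, c8e3, c8e4, c8e5, c8e6, c8e7, uCode, hw, Pi.add_apply] <;> norm_num
    · by_cases h2 : pre c l 1 1 0
      · refine key 3 hQ (by simp [br]; exact ⟨hp, h2⟩) ?_
        intro s p; fin_cases s <;> fin_cases p <;>
          simp [AGB, c8e0, c8e1, c8e2, c8e3, c8e4, c8e5, c8e6, c8e7, uCode, hw, Pi.add_apply] <;> norm_num
      · refine key 2 hQ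
          (by simp [br]; exact ⟨hp, npre_of_not_pre h1, npre_of_not_pre h2⟩) ?_
        intro s p; fin_cases s <;> fin_cases p <;>
          simp [AGB, c8e0, c8e1, c8e2, c8e3, c8e4, c8e5, c8e6, c8e7, uCode, hw, Pi.add_apply] <;> norm_num
  · by_cases h1 : pre c l 0 0 1
    · refine key 3 hQ (by simp [br]; exact ⟨h1, hp⟩) ?_
      intro s p; fin_cases s <;> fin_cases p <;>
        simp [AGB, c8e0, c8e1, c8e2, c8e3, c8e4, c8e5, c8e6, c8e7, uCode, hw, Pi.add_apply] <;> norm_num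
    · by_cases h2 : pre c l 0 1 0
      · refine key 5 hQ (by simp [br]; exact ⟨h2, hp⟩) ?_
        intro s p; fin_cases s <;> fin_cases p <;>
          simp [AGB, c8e0, c8e1, c8e2, c8e3, c8e4, c8e5, c8e6, c8e7, uCode, hw, Pi.add_apply] <;> norm_num
      · refine key 4 hQ
          (by simp [br]; exact ⟨hp, npre_of_not_pre h1, npre_of_not_pre h2⟩) ?_
        intro s p; fin_cases s <;> fin_cases p <;>
          simp [AGB, c8e0, c8e1, c8e2, c8e3, c8e4, c8e5, c8e6, c8e7, uCode, hw, Pi.add_apply] <;> norm_num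
  · by_cases h1 : pre c l 1 1 0
    · refine key 5 hQ (by simp [br]; exact ⟨hp, h1⟩) ?_
      intro s p; fin_cases s <;> fin_cases p <;>
        simp [AGB, c8e0, c8e1, c8e2, c8e3, c8e4, c8e5, c8e6, c8e7, uCode, hw, Pi.add_apply] <;> norm_num
    · by_cases h2 : pre c l 1 0 1
      · refine key 7 hQ (by simp [br]; exact ⟨hp, h2⟩) ?_
        intro s p; fin_cases s <;> fin_cases p <;>
          simp [AGB, c8e0, c8e1, c8e2, c8e3, c8e4, c8e5, c8e6, c8e7, uCode, hw, Pi.add_apply] <;> norm_num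
      · refine key 6 hQ
          (by simp [br]; exact ⟨hp, npre_of_not_pre h2, npre_of_not_pre h1⟩) ?_
        intro s p; fin_cases s <;> fin_cases p <;>
          simp [AGB, c8e0, c8e1, c8e2, c8e3, c8e4, c8e5, c8e6, c8e7, uCode, hw, Pi.add_apply] <;> norm_num
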